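/- Let n ≥ 1, σ ∈ (0, n/2), and let u : ℝⁿ \ {0} → [0, ∞) be measurable. Define v(x) = |x|^{-(n-2σ)} u(x/|x|²) for x ≠ 0. If u satisfies u(x) = ∫_{ℝⁿ} u(y)^p |y|^{-α} |x - y|^{-(n-2σ)} dy for all x ≠ 0 (with the integral finite), then v satisfies v(x) = ∫_{ℝⁿ} v(y)^p |y|^{-θ} |x - y|^{-(n-2σ)} dy for all x ≠ 0, where θ = n + 2σ - α - p(n - 2σ). -/

import Mathlib

/-!
Substitute `y ↦ y / ‖y‖²` (Jacobian `‖y‖⁻²ⁿ`) in the integral equation for `u` at the point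
`x / ‖x‖²`. Since `‖x / ‖x‖² - y / ‖y‖²‖ = ‖x - y‖ / (‖x‖ ‖y‖)`, the kernel turns into
`‖x - y‖^{-(n-2σ)}` times `(‖x‖ ‖y‖)^{n-2σ}`; the power of `‖x‖` is absorbed by the prefactor of the
Kelvin transform `v`, and all powers of `‖y‖` collect into `v(y)^p ‖y‖^{-θ}`.
-/

open MeasureTheory EuclideanGeometry Module Real

theorem kelvin_integrand_rpow_identity {r R D U : ℝ} (hr : 0 < r) (hR : 0 < R) (hD : 0 ≤ D)
    (hU : 0 ≤ U) (d : ℕ) (t α p : ℝ) :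
    (r ^ (-t) * U) ^ p * r ^ (-(2 * d - t - α - p * t)) * D ^ (-t) =
      R ^ (-t) * ((r ^ 2)⁻¹ ^ d * (U ^ p * r⁻¹ ^ (-α) * (D / (R * r)) ^ (-t))) := by
  have hrt : 0 < r ^ t := by positivity
  have hexp : r ^ (2 * d - t - α - p * t) = (r ^ 2) ^ d / r ^ t / r ^ α / (r ^ t) ^ p := by
    rw [rpow_sub hr, rpow_sub hr, rpow_sub hr, mul_comm p, rpow_mul hr.le t p, rpow_mul hr.le,
      rpow_two, rpow_natCast]
  rw [rpow_neg hr.le (2 * d - t - α - p * t), hexp, rpow_neg hr.le, mul_rpow (by positivity) hU,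
    inv_rpow hrt.le, inv_rpow hr.le, rpow_neg hr.le α, inv_inv, div_rpow hD (by positivity),
    mul_rpow hR.le hr.le, rpow_neg hR.le, rpow_neg hD, rpow_neg (by positivity), inv_pow]
  field_simp

variable {E : Type*} [NormedAddCommGroup E] [InnerProductSpace ℝ E]

theorem inversion_zero_one_apply (x : E) : inversion 0 1 x = (1 / ‖x‖ ^ 2) • x := by
  simp [inversion]

theorem norm_inversion_zero_one (x : E) : ‖inversion 0 1 x‖ = ‖x‖⁻¹ := by
  simpa using dist_inversion_center (0 : E) x 1

theorem norm_inversion_zero_one_sub_inversion {x y : E} (hx : x ≠ 0) (hy : y ≠ 0) :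
    ‖inversion 0 1 x - inversion 0 1 y‖ = ‖x - y‖ / (‖x‖ * ‖y‖) := by
  simpa [dist_eq_norm, div_eq_inv_mul, mul_comm] using dist_inversion_inversion hx hy 1

theorem inversion_zero_one_image_compl_zero : inversion (0 : E) 1 '' {0}ᶜ = {0}ᶜ := by
  rw [(inversion_involutive (0 : E) one_ne_zero).image_eq_preimage_symm]
  ext x
  simp

section FiniteDimensional

variable [FiniteDimensional ℝ E]

theorem abs_det_fderiv_inversion_zero_one (x : E) :
    |((1 / dist x 0) ^ 2 • ((ℝ ∙ (x - 0))ᗮ.reflection : E →L[ℝ] E)).det| =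
      (‖x‖ ^ 2)⁻¹ ^ finrank ℝ E := by
  rw [ContinuousLinearMap.det, ContinuousLinearMap.toLinearMap_smul, LinearMap.det_smul]
  erw [Submodule.det_reflection]
  simp [abs_mul, abs_pow]

variable [MeasurableSpace E] [BorelSpace E] (μ : Measure E) [μ.IsAddHaarMeasure]

theorem integral_comp_inversion_zero_one [Nontrivial E] {F : Type*} [NormedAddCommGroup F]
    [NormedSpace ℝ F] (f : E → F) :
    ∫ y, ((‖y‖ ^ 2)⁻¹ ^ finrank ℝ E) • f (inversion 0 1 y) ∂μ = ∫ y, f y ∂μ := by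
  have hs : MeasurableSet ({0}ᶜ : Set E) := (measurableSet_singleton 0).compl
  have h := integral_image_eq_integral_abs_det_fderiv_smul μ hs
    (fun x hx => (hasFDerivAt_inversion (c := (0 : E)) (R := 1) hx).hasFDerivWithinAt)
    (inversion_injective (0 : E) one_ne_zero).injOn f
  rw [inversion_zero_one_image_compl_zero, restrict_compl_singleton] at h
  simp_rw [h, abs_det_fderiv_inversion_zero_one]

noncomputable def kelvinTransform (t : ℝ) (u : E → ℝ) (x : E) : ℝ :=
  ‖x‖ ^ (-t) * u (inversion 0 1 x)

theorem integral_kelvinTransform_rpow_mul_riesz {u : E → ℝ} (hu : ∀ y, 0 ≤ u y) (t α p : ℝ)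
    {x : E} (hx : x ≠ 0) :
    ∫ y, kelvinTransform t u y ^ p * ‖y‖ ^ (-(2 * finrank ℝ E - t - α - p * t)) *
        ‖x - y‖ ^ (-t) ∂μ =
      ‖x‖ ^ (-t) * ∫ y, u y ^ p * ‖y‖ ^ (-α) * ‖inversion 0 1 x - y‖ ^ (-t) ∂μ := by
  have := nontrivial_of_ne x 0 hx
  conv_rhs => rw [← integral_comp_inversion_zero_one μ, ← integral_const_mul]
  refine integral_congr_ae ?_
  filter_upwards [compl_mem_ae_iff.2 (measure_singleton (0 : E))] with y hy
  rw [smul_eq_mul, norm_inversion_zero_one, norm_inversion_zero_one_sub_inversion hx hy]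
  exact kelvin_integrand_rpow_identity (norm_pos_iff.2 hy) (norm_pos_iff.2 hx) (norm_nonneg _)
    (hu _) _ t α p

end FiniteDimensional

theorem kelvin_transform_integral_equation_general (n : ℕ) (σ α p : ℝ)
    (u : EuclideanSpace ℝ (Fin n) → ℝ) (hnn : ∀ x, 0 ≤ u x)
    (heq : ∀ x : EuclideanSpace ℝ (Fin n), x ≠ 0 →
      Integrable (fun y => u y ^ p * ‖y‖ ^ (-α) * ‖x - y‖ ^ (-((n : ℝ) - 2 * σ))) ∧
      u x = ∫ y, u y ^ p * ‖y‖ ^ (-α) * ‖x - y‖ ^ (-((n : ℝ) - 2 * σ))) :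
    ∀ x : EuclideanSpace ℝ (Fin n), x ≠ 0 →
      ‖x‖ ^ (-((n : ℝ) - 2 * σ)) * u ((1 / ‖x‖ ^ 2) • x) =
        ∫ y, (‖y‖ ^ (-((n : ℝ) - 2 * σ)) * u ((1 / ‖y‖ ^ 2) • y)) ^ p *
          ‖y‖ ^ (-((n : ℝ) + 2 * σ - α - p * ((n : ℝ) - 2 * σ))) *
          ‖x - y‖ ^ (-((n : ℝ) - 2 * σ)) := by
  intro x hx
  have hθ : (n : ℝ) + 2 * σ - α - p * ((n : ℝ) - 2 * σ) =
      2 * finrank ℝ (EuclideanSpace ℝ (Fin n)) - (n - 2 * σ) - α - p * (n - 2 * σ) := by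
    rw [finrank_euclideanSpace_fin]
    ring
  simp_rw [← inversion_zero_one_apply, hθ]
  rw [(heq _ ((inversion_eq_center one_ne_zero).not.2 hx)).2]
  exact (integral_kelvinTransform_rpow_mul_riesz volume hnn _ α p hx).symm

/-- The Kelvin transform `v(x) = |x|^{-(n-2σ)} u(x/|x|²)` of a solution of
`u(x) = ∫ u(y)^p |y|^{-α} |x-y|^{-(n-2σ)} dy` solves the same equation with weight
exponent `θ = n + 2σ - α - p(n-2σ)`. -/
theorem kelvin_transform_integral_equation (n : ℕ) (hn : 1 ≤ n) (σ α p : ℝ)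
    (hσ : 0 < σ) (hσ2 : σ < (n : ℝ) / 2)
    (u : EuclideanSpace ℝ (Fin n) → ℝ) (hm : Measurable u) (hnn : ∀ x, 0 ≤ u x)
    (heq : ∀ x : EuclideanSpace ℝ (Fin n), x ≠ 0 →
      Integrable (fun y => u y ^ p * ‖y‖ ^ (-α) * ‖x - y‖ ^ (-((n : ℝ) - 2 * σ))) ∧
      u x = ∫ y, u y ^ p * ‖y‖ ^ (-α) * ‖x - y‖ ^ (-((n : ℝ) - 2 * σ))) :
    ∀ x : EuclideanSpace ℝ (Fin n), x ≠ 0 →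
      ‖x‖ ^ (-((n : ℝ) - 2 * σ)) * u ((1 / ‖x‖ ^ 2) • x) =
        ∫ y, (‖y‖ ^ (-((n : ℝ) - 2 * σ)) * u ((1 / ‖y‖ ^ 2) • y)) ^ p *
          ‖y‖ ^ (-((n : ℝ) + 2 * σ - α - p * ((n : ℝ) - 2 * σ))) *
          ‖x - y‖ ^ (-((n : ℝ) - 2 * σ)) :=
  kelvin_transform_integral_equation_general n σ α p u hnn heq
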